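/- Let n ≥ 3 be an integer, ω₀ > 1, δ ∈ (0,1), v̄ > 0, p₀ ≥ 0 with p₀ < v̄ − ln(n−1+ω₀)/δ, and let v† ∈ (0, v̄) be the unique zero of Φ(v) = p₀ + J̃(v)/δ − v on [0, v̄]. Then J̃'(v†) < δ. -/

import Mathlib

/-!
`J̃(v)` is the degree-`(n-1)` Bernstein polynomial of `m ↦ ln (m + ω₀)` evaluated at `v / v̄`.
Differentiating a Bernstein polynomial takes forward differences of its coefficients, and the
second differences of `ln (m + ω₀)` are nonpositive by concavity of `ln`, so `J̃` is concave on
`[0, v̄]`. Hence `J̃'(v†)` is at most the secant slope `(J̃(v†) - J̃(0)) / v†`, which equals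
`(δ (v† - p₀) - ln ω₀) / v† < δ` since `Φ(v†) = 0`, `J̃(0) = ln ω₀ > 0` and `p₀ ≥ 0`.
-/

open Real Finset

/-- The expected social-network benefit at threshold `v` under uniform valuations. -/
noncomputable def Jt (n : ℕ) (ω₀ vbar : ℝ) (v : ℝ) : ℝ :=
  ∑ m ∈ Finset.range n, (Nat.choose (n - 1) m : ℝ) * Real.log ((m : ℝ) + ω₀) *
    (v / vbar) ^ m * (1 - v / vbar) ^ (n - 1 - m)

noncomputable def bernsteinSum (k : ℕ) (g : ℕ → ℝ) (x : ℝ) : ℝ :=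
  ∑ m ∈ range (k + 1), (k.choose m : ℝ) * g m * x ^ m * (1 - x) ^ (k - m)

theorem hasDerivAt_bernsteinSum_succ (k : ℕ) (g : ℕ → ℝ) (x : ℝ) :
    HasDerivAt (bernsteinSum (k + 1) g)
      ((k + 1) * bernsteinSum k (fun m => g (m + 1) - g m) x) x := by
  have hterm : ∀ m ∈ range (k + 1 + 1),
      HasDerivAt (fun y => ((k + 1).choose m : ℝ) * g m * y ^ m * (1 - y) ^ (k + 1 - m))
        (((k + 1).choose m : ℝ) * g m * (m * x ^ (m - 1)) * (1 - x) ^ (k + 1 - m)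
          - ((k + 1).choose m : ℝ) * g m * x ^ m * ((k + 1 - m : ℕ) * (1 - x) ^ (k - m))) x := by
    intro m _
    refine (((hasDerivAt_pow m x).const_mul (((k + 1).choose m : ℝ) * g m)).mul
      ((hasDerivAt_pow (k + 1 - m) (1 - x)).comp x
        ((hasDerivAt_id x).const_sub 1))).congr_deriv ?_
    rw [show k + 1 - m - 1 = k - m by omega, Function.comp_apply]
    ring
  refine (HasDerivAt.fun_sum hterm).congr_deriv ?_
  rw [sum_sub_distrib, sum_range_succ', sum_range_succ _ (k + 1), bernsteinSum, mul_sum]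
  simp only [Nat.cast_zero, zero_mul, mul_zero, add_zero, Nat.sub_self]
  rw [← sum_sub_distrib]
  refine sum_congr rfl fun m hm => ?_
  have hleft : ((k + 1).choose (m + 1) : ℝ) * (m + 1) = (k + 1) * k.choose m := by
    exact_mod_cast (Nat.add_one_mul_choose_eq k m).symm
  have hright : ((k + 1).choose m : ℝ) * (k + 1 - m : ℕ) = k.choose m * (k + 1) := by
    exact_mod_cast (Nat.choose_mul_succ_eq k m).symm
  rw [show m + 1 - 1 = m by omega, show k + 1 - (m + 1) = k - m by omega]
  push_cast
  linear_combination (g (m + 1) * x ^ m * (1 - x) ^ (k - m)) * hleft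
    - (g m * x ^ m * (1 - x) ^ (k - m)) * hright

theorem bernsteinSum_nonpos {k : ℕ} {g : ℕ → ℝ} (hg : ∀ m, g m ≤ 0) {x : ℝ}
    (hx : x ∈ Set.Icc (0 : ℝ) 1) : bernsteinSum k g x ≤ 0 := by
  refine sum_nonpos fun m _ => ?_
  rw [mul_comm _ (g m), mul_assoc, mul_assoc]
  have hx' : 0 ≤ 1 - x := sub_nonneg.2 hx.2
  exact mul_nonpos_of_nonpos_of_nonneg (hg m)
    (mul_nonneg (Nat.cast_nonneg _) (mul_nonneg (pow_nonneg hx.1 _) (pow_nonneg hx' _)))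

theorem differentiable_bernsteinSum (k : ℕ) (g : ℕ → ℝ) :
    Differentiable ℝ (bernsteinSum k g) := by
  unfold bernsteinSum
  fun_prop

theorem bernsteinSum_zero (g : ℕ → ℝ) : bernsteinSum 0 g = fun _ => g 0 :=
  funext fun x => by simp [bernsteinSum]

theorem antitoneOn_bernsteinSum {g : ℕ → ℝ} (hg : Antitone g) :
    ∀ k, AntitoneOn (bernsteinSum k g) (Set.Icc 0 1)
  | 0 => by simpa only [bernsteinSum_zero] using antitoneOn_const
  | k + 1 => by
    refine antitoneOn_of_deriv_nonpos (convex_Icc 0 1)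
      (differentiable_bernsteinSum _ g).continuous.continuousOn
      (differentiable_bernsteinSum _ g).differentiableOn fun x hx => ?_
    rw [(hasDerivAt_bernsteinSum_succ k g x).deriv]
    exact mul_nonpos_of_nonneg_of_nonpos (by positivity) (bernsteinSum_nonpos
      (fun m => sub_nonpos.mpr (hg m.le_succ)) (interior_subset hx))

theorem concaveOn_bernsteinSum {g : ℕ → ℝ} (hg : Antitone fun m => g (m + 1) - g m) :
    ∀ k, ConcaveOn ℝ (Set.Icc 0 1) (bernsteinSum k g)
  | 0 => by simpa only [bernsteinSum_zero] using concaveOn_const (g 0) (convex_Icc (0 : ℝ) 1)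
  | k + 1 => by
    refine AntitoneOn.concaveOn_of_deriv (convex_Icc 0 1)
      (differentiable_bernsteinSum _ g).continuous.continuousOn
      (differentiable_bernsteinSum _ g).differentiableOn ?_
    rw [show deriv (bernsteinSum (k + 1) g) = fun x => (k + 1) * bernsteinSum k _ x from
      funext fun x => (hasDerivAt_bernsteinSum_succ k g x).deriv]
    exact fun x hx y hy hxy => mul_le_mul_of_nonneg_left
      (antitoneOn_bernsteinSum hg k (interior_subset hx) (interior_subset hy) hxy) (by positivity)

theorem antitone_log_succ_add_sub_log_add {ω : ℝ} (hω : 0 < ω) :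
    Antitone fun m : ℕ => log ((m + 1 : ℕ) + ω) - log (m + ω) := by
  refine antitone_nat_of_succ_le fun m => ?_
  have hm : (0 : ℝ) ≤ m := m.cast_nonneg
  have h := strictConcaveOn_log_Ioi.concaveOn.slope_anti_adjacent
    (x := m + ω) (y := m + 1 + ω) (z := m + 2 + ω)
    (Set.mem_Ioi.2 (by linarith)) (Set.mem_Ioi.2 (by linarith)) (by linarith) (by linarith)
  rw [show (m : ℝ) + 2 + ω - (m + 1 + ω) = 1 by ring,
    show (m : ℝ) + 1 + ω - (m + ω) = 1 by ring, div_one, div_one] at h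
  push_cast
  convert h using 3; ring

theorem Jt_succ (k : ℕ) (ω₀ vbar v : ℝ) :
    Jt (k + 1) ω₀ vbar v = bernsteinSum k (fun m => log (m + ω₀)) (v / vbar) := by
  simp only [Jt, bernsteinSum, Nat.add_sub_cancel]

theorem concaveOn_Jt (k : ℕ) {ω₀ vbar : ℝ} (hω : 0 < ω₀) (hv : 0 < vbar) :
    ConcaveOn ℝ (Set.Icc 0 vbar) (Jt (k + 1) ω₀ vbar) := by
  have h := (concaveOn_bernsteinSum (g := fun m => log (m + ω₀))
    (antitone_log_succ_add_sub_log_add hω) k).comp_linearMap (vbar⁻¹ • LinearMap.id)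
  have hset : (vbar⁻¹ • LinearMap.id : ℝ →ₗ[ℝ] ℝ) ⁻¹' Set.Icc 0 1 = Set.Icc 0 vbar := by
    ext v
    simp [← div_eq_inv_mul, le_div_iff₀ hv, div_le_one hv]
  have hfun : bernsteinSum k (fun m => log (m + ω₀)) ∘ (vbar⁻¹ • LinearMap.id : ℝ →ₗ[ℝ] ℝ)
      = Jt (k + 1) ω₀ vbar :=
    funext fun v => by simp [Jt_succ, div_eq_inv_mul]
  rwa [hset, hfun] at h

theorem Jt_succ_zero (k : ℕ) (ω₀ vbar : ℝ) : Jt (k + 1) ω₀ vbar 0 = log ω₀ := by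
  simp [Jt_succ, bernsteinSum, sum_range_succ']

theorem stmt6_general (n : ℕ) (hn : 3 ≤ n) (ω₀ δ vbar p₀ vdag : ℝ) (hω : 1 < ω₀)
    (hδ : δ ∈ Set.Ioo (0 : ℝ) 1) (hv : 0 < vbar) (hp : 0 ≤ p₀)
    (hd : vdag ∈ Set.Ioo (0 : ℝ) vbar)
    (hzero : p₀ + Jt n ω₀ vbar vdag / δ - vdag = 0) :
    deriv (Jt n ω₀ vbar) vdag < δ := by
  obtain ⟨k, rfl⟩ : ∃ k, n = k + 1 := ⟨n - 1, by omega⟩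
  obtain ⟨hδ0, -⟩ := hδ
  have hJ : Jt (k + 1) ω₀ vbar vdag = δ * (vdag - p₀) := by
    field_simp at hzero
    linarith
  have hderiv := (concaveOn_Jt k (zero_lt_one.trans hω) hv).deriv_le_slope
    (Set.left_mem_Icc.2 hv.le) (Set.Ioo_subset_Icc_self hd) hd.1 (by unfold Jt; fun_prop)
  rw [slope_def_field, hJ, Jt_succ_zero, sub_zero] at hderiv
  have hslope : (δ * (vdag - p₀) - log ω₀) / vdag < δ := by
    rw [div_lt_iff₀ hd.1]
    nlinarith [Real.log_pos hω, mul_nonneg hδ0.le hp]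
  exact hderiv.trans_lt hslope

/-- If `p₀ < v̄ − ln(n−1+ω₀)/δ` and `v† ∈ (0, v̄)` is the zero of
`Φ(v) = p₀ + J̃(v)/δ − v`, then `J̃'(v†) < δ`. -/
theorem stmt6 (n : ℕ) (hn : 3 ≤ n) (ω₀ δ vbar p₀ vdag : ℝ) (hω : 1 < ω₀)
    (hδ : δ ∈ Set.Ioo (0 : ℝ) 1) (hv : 0 < vbar) (hp : 0 ≤ p₀)
    (hpv : p₀ < vbar - Real.log ((n : ℝ) - 1 + ω₀) / δ)
    (hd : vdag ∈ Set.Ioo (0 : ℝ) vbar)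
    (hzero : p₀ + Jt n ω₀ vbar vdag / δ - vdag = 0) :
    deriv (Jt n ω₀ vbar) vdag < δ :=
  stmt6_general n hn ω₀ δ vbar p₀ vdag hω hδ hv hp hd hzero
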